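/- Let L be symmetric with eigenvalues λ₁ ≥ … ≥ λ_n and orthonormal eigenvectors u₁,…,u_n, and let Q ∈ ℝ^{n×κ} have orthonormal columns with LQ = QT. Then ‖L − QTQᵀ‖²_F ≤ Σ_{i=1}^{j} λᵢ² ‖P⊥_Q uᵢ‖² + Σ_{i=j+1}^{n} λᵢ² for every 1 ≤ j ≤ n, where P⊥_Q = I − QQᵀ. -/

import Mathlib

/-! Since `LQ = QT`, the residual `L - QTQᵀ` equals `L(I - QQᵀ)`. Transposing and inserting
`L = UΛUᵀ` with `U` orthogonal, its squared Frobenius norm is `Σᵢ λᵢ² ‖(I - QQᵀ)uᵢ‖²`, and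
`I - QQᵀ` is an orthogonal projection, so every term is at most `λᵢ²`. -/

open Matrix

section SumSqEntries

variable {m n o R : Type*} [Fintype m] [Fintype n] [Fintype o]

theorem sum_sq_entries_eq_trace_mul_transpose [Semiring R] (A : Matrix m n R) :
    ∑ i, ∑ k, A i k ^ 2 = trace (A * Aᵀ) := by
  simp only [trace, diag, mul_apply, transpose_apply, sq]

theorem sum_sq_entries_transpose [Semiring R] (A : Matrix m n R) :
    ∑ i, ∑ k, Aᵀ i k ^ 2 = ∑ i, ∑ k, A i k ^ 2 :=
  Finset.sum_comm

theorem sum_sq_entries_mul_transpose_of_transpose_mul_eq_one [CommSemiring R] [DecidableEq n]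
    (A : Matrix m n R) {U : Matrix o n R} (hU : Uᵀ * U = 1) :
    ∑ i, ∑ k, (A * Uᵀ) i k ^ 2 = ∑ i, ∑ k, A i k ^ 2 := by
  rw [sum_sq_entries_eq_trace_mul_transpose, sum_sq_entries_eq_trace_mul_transpose,
    transpose_mul, transpose_transpose, Matrix.mul_assoc, ← Matrix.mul_assoc Uᵀ, hU,
    Matrix.one_mul]

theorem sum_sq_entries_mul_diagonal [CommSemiring R] [DecidableEq n]
    (A : Matrix m n R) (d : n → R) :
    ∑ i, ∑ k, (A * diagonal d) i k ^ 2 = ∑ k, d k ^ 2 * ∑ i, A i k ^ 2 := by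
  rw [Finset.sum_comm]
  refine Finset.sum_congr rfl fun k _ => ?_
  rw [Finset.mul_sum]
  refine Finset.sum_congr rfl fun i _ => ?_
  rw [mul_diagonal, mul_pow, mul_comm]

end SumSqEntries

section OrthogonalProjection

variable {m n : Type*} [Fintype n] [DecidableEq m] {Q : Matrix m n ℝ}

theorem isIdempotentElem_one_sub_mul_transpose [Fintype m] [DecidableEq n] (hQ : Qᵀ * Q = 1) :
    IsIdempotentElem (1 - Q * Qᵀ) :=
  IsIdempotentElem.one_sub <| by
    rw [IsIdempotentElem, Matrix.mul_assoc, ← Matrix.mul_assoc Qᵀ, hQ, Matrix.one_mul]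

theorem transpose_one_sub_mul_transpose : (1 - Q * Qᵀ)ᵀ = 1 - Q * Qᵀ := by
  rw [transpose_sub, transpose_one, transpose_mul, transpose_transpose]

theorem sum_sq_one_sub_mul_transpose_mulVec_le [Fintype m] [DecidableEq n] (hQ : Qᵀ * Q = 1)
    (v : m → ℝ) :
    ∑ r, ((1 - Q * Qᵀ) *ᵥ v) r ^ 2 ≤ ∑ r, v r ^ 2 := by
  set E := 1 - Q * Qᵀ
  have hEv : (E *ᵥ v) ⬝ᵥ (E *ᵥ v) = v ⬝ᵥ v - (Qᵀ *ᵥ v) ⬝ᵥ (Qᵀ *ᵥ v) := by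
    rw [dotProduct_mulVec, ← mulVec_transpose, transpose_one_sub_mul_transpose,
      mulVec_mulVec, (isIdempotentElem_one_sub_mul_transpose hQ).eq, dotProduct_comm,
      sub_mulVec, one_mulVec, dotProduct_sub, ← mulVec_mulVec, dotProduct_mulVec v,
      ← mulVec_transpose]
  have hQv : 0 ≤ (Qᵀ *ᵥ v) ⬝ᵥ (Qᵀ *ᵥ v) := Finset.sum_nonneg fun _ _ => mul_self_nonneg _
  simp only [sq]
  change (E *ᵥ v) ⬝ᵥ (E *ᵥ v) ≤ v ⬝ᵥ v
  linarith

end OrthogonalProjection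

theorem lanczos_lowrank_bound_general {n κ : ℕ}
    (L U Λ : Matrix (Fin n) (Fin n) ℝ) (lam : Fin n → ℝ)
    (hU : Uᵀ * U = 1) (hΛ : Λ = Matrix.diagonal lam)
    (hdecomp : L = U * Λ * Uᵀ)
    (Q : Matrix (Fin n) (Fin κ) ℝ) (T : Matrix (Fin κ) (Fin κ) ℝ)
    (hQ : Qᵀ * Q = 1) (hLQ : L * Q = Q * T)
    (j : ℕ) :
    ∑ i, ∑ k, ((L - Q * T * Qᵀ) i k) ^ 2
      ≤ ∑ i : Fin n,
          (if (i : ℕ) < j then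
            (lam i) ^ 2 *
              (∑ r, ((((1 : Matrix (Fin n) (Fin n) ℝ) - Q * Qᵀ) *ᵥ fun s => U s i) r) ^ 2)
          else (lam i) ^ 2) := by
  set E : Matrix (Fin n) (Fin n) ℝ := 1 - Q * Qᵀ
  have hresidual : L - Q * T * Qᵀ = L * E := by
    rw [← hLQ, mul_sub, mul_one, Matrix.mul_assoc]
  have hresidual_transpose : (L * E)ᵀ = E * U * diagonal lam * Uᵀ := by
    rw [transpose_mul, transpose_one_sub_mul_transpose, hdecomp, hΛ, transpose_mul,
      transpose_mul, transpose_transpose, diagonal_transpose]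
    simp only [Matrix.mul_assoc]
    rfl
  have hfrobenius : ∑ i, ∑ k, ((L - Q * T * Qᵀ) i k) ^ 2
      = ∑ i, lam i ^ 2 * ∑ r, (E *ᵥ fun s => U s i) r ^ 2 := by
    rw [hresidual, ← sum_sq_entries_transpose, hresidual_transpose,
      sum_sq_entries_mul_transpose_of_transpose_mul_eq_one _ hU, sum_sq_entries_mul_diagonal]
    rfl
  rw [hfrobenius]
  refine Finset.sum_le_sum fun i _ => ?_
  split_ifs
  · exact le_rfl
  · have hunit : ∑ r, U r i ^ 2 = 1 := by
      simpa [sq, mul_apply] using congrFun (congrFun hU i) i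
    calc lam i ^ 2 * ∑ r, (E *ᵥ fun s => U s i) r ^ 2
        ≤ lam i ^ 2 * ∑ r, U r i ^ 2 :=
          mul_le_mul_of_nonneg_left (sum_sq_one_sub_mul_transpose_mulVec_le hQ _) (sq_nonneg _)
      _ = lam i ^ 2 := by rw [hunit, mul_one]

/-- Low-rank approximation bound for the Lanczos algorithm: if `L = UΛUᵀ` with
eigenvalues `λ₁ ≥ … ≥ λ_n` and `LQ = QT` with `Q` orthonormal, then for every `j`,
`‖L − QTQᵀ‖²_F ≤ Σ_{i<j} λᵢ² ‖(I − QQᵀ)uᵢ‖² + Σ_{i≥j} λᵢ²`. -/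
theorem lanczos_lowrank_bound {n κ : ℕ}
    (L U Λ : Matrix (Fin n) (Fin n) ℝ) (lam : Fin n → ℝ)
    (hL : L.IsSymm) (hU : Uᵀ * U = 1) (hΛ : Λ = Matrix.diagonal lam)
    (hdecomp : L = U * Λ * Uᵀ)
    (hsort : ∀ i i' : Fin n, i ≤ i' → lam i' ≤ lam i)
    (Q : Matrix (Fin n) (Fin κ) ℝ) (T : Matrix (Fin κ) (Fin κ) ℝ)
    (hQ : Qᵀ * Q = 1) (hT : T = Qᵀ * L * Q) (hLQ : L * Q = Q * T)
    (j : ℕ) (hj1 : 1 ≤ j) (hjn : j ≤ n) :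
    ∑ i, ∑ k, ((L - Q * T * Qᵀ) i k) ^ 2
      ≤ ∑ i : Fin n,
          (if (i : ℕ) < j then
            (lam i) ^ 2 *
              (∑ r, ((((1 : Matrix (Fin n) (Fin n) ℝ) - Q * Qᵀ) *ᵥ fun s => U s i) r) ^ 2)
          else (lam i) ^ 2) :=
  lanczos_lowrank_bound_general L U Λ lam hU hΛ hdecomp Q T hQ hLQ j
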